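/- arXiv:1202.1673 — 3 statements merged into one kernel-verified Lean document; each statement's English description precedes it below -/
import Mathlib

section
/- Let Δ' = ∂_{x_0}² + 2Δ and η' = x_0² + 2η act on B = ℂ[x_0] ⊗ A, where A is the supercommutative algebra on even x_1,...,x_n,y_1,...,y_n and odd θ_1,...,θ_m,ϑ_1,...,ϑ_m, Δ = Σ_i ∂_{x_i}∂_{y_i} + Σ_r ∂_{θ_r}∂_{ϑ_r}, and η = Σ_i x_i y_i + Σ_r θ_r ϑ_r. Then Δ'∘η' − η'∘Δ' = (2 + 4(n − m))·Id + 4·[x_0∂_{x_0} + Σ_{i=1}^n (x_i∂_{x_i} + y_i∂_{y_i}) + Σ_{r=1}^m (θ_r∂_{θ_r} + ϑ_r∂_{ϑ_r})]. -/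
open TensorProduct MvPolynomial

noncomputable section

variable (n m : ℕ)

/-- bosonic polynomial part with the extra variable x₀ (index `Sum.inl 0`) -/
abbrev PolyB (n : ℕ) := MvPolynomial (Fin (n + 1) ⊕ Fin n) ℂ
abbrev ExtA (m : ℕ) := ExteriorAlgebra ℂ ((Fin m ⊕ Fin m) → ℂ)
/-- B = ℂ[x₀] ⊗ A -/
abbrev SAlgB (n m : ℕ) := PolyB n ⊗[ℂ] ExtA m

def x0v : PolyB n := X (Sum.inl 0)
def xv (i : Fin n) : PolyB n := X (Sum.inl i.succ)
def yv (i : Fin n) : PolyB n := X (Sum.inr i)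
def θv (r : Fin m) : ExtA m := ExteriorAlgebra.ι ℂ (Pi.single (Sum.inl r) 1)
def ϑv (r : Fin m) : ExtA m := ExteriorAlgebra.ι ℂ (Pi.single (Sum.inr r) 1)

def dθ (r : Fin m) : Module.End ℂ (ExtA m) :=
  CliffordAlgebra.contractLeft (Q := (0 : QuadraticForm ℂ ((Fin m ⊕ Fin m) → ℂ)))
    (LinearMap.proj (Sum.inl r))
def dϑ (r : Fin m) : Module.End ℂ (ExtA m) :=
  CliffordAlgebra.contractLeft (Q := (0 : QuadraticForm ℂ ((Fin m ⊕ Fin m) → ℂ)))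
    (LinearMap.proj (Sum.inr r))

def pdx0 : Module.End ℂ (SAlgB n m) :=
  TensorProduct.map ((pderiv (Sum.inl 0) : Derivation ℂ (PolyB n) (PolyB n)) : PolyB n →ₗ[ℂ] PolyB n) LinearMap.id
def pdx (i : Fin n) : Module.End ℂ (SAlgB n m) :=
  TensorProduct.map ((pderiv (Sum.inl i.succ) : Derivation ℂ (PolyB n) (PolyB n)) : PolyB n →ₗ[ℂ] PolyB n) LinearMap.id
def pdy (i : Fin n) : Module.End ℂ (SAlgB n m) :=
  TensorProduct.map ((pderiv (Sum.inr i) : Derivation ℂ (PolyB n) (PolyB n)) : PolyB n →ₗ[ℂ] PolyB n) LinearMap.id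
def pdθ (r : Fin m) : Module.End ℂ (SAlgB n m) := TensorProduct.map LinearMap.id (dθ m r)
def pdϑ (r : Fin m) : Module.End ℂ (SAlgB n m) := TensorProduct.map LinearMap.id (dϑ m r)

def mx0 : Module.End ℂ (SAlgB n m) := LinearMap.mulLeft ℂ (x0v n ⊗ₜ[ℂ] 1)
def mx (i : Fin n) : Module.End ℂ (SAlgB n m) := LinearMap.mulLeft ℂ (xv n i ⊗ₜ[ℂ] 1)
def my (i : Fin n) : Module.End ℂ (SAlgB n m) := LinearMap.mulLeft ℂ (yv n i ⊗ₜ[ℂ] 1)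
def mθ (r : Fin m) : Module.End ℂ (SAlgB n m) := LinearMap.mulLeft ℂ ((1 : PolyB n) ⊗ₜ[ℂ] θv m r)
def mϑ (r : Fin m) : Module.End ℂ (SAlgB n m) := LinearMap.mulLeft ℂ ((1 : PolyB n) ⊗ₜ[ℂ] ϑv m r)

/-- η = Σ_i x_i y_i + Σ_r θ_r ϑ_r -/
def ηelt : SAlgB n m :=
  (∑ i : Fin n, (xv n i * yv n i) ⊗ₜ[ℂ] (1 : ExtA m))
    + ∑ r : Fin m, (1 : PolyB n) ⊗ₜ[ℂ] (θv m r * ϑv m r)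

/-- Δ = Σ_i ∂_{x_i}∂_{y_i} + Σ_r ∂_{θ_r}∂_{ϑ_r} (no x₀ part) -/
def ΔS : Module.End ℂ (SAlgB n m) :=
  (∑ i : Fin n, pdx n m i ∘ₗ pdy n m i) + ∑ r : Fin m, pdθ n m r ∘ₗ pdϑ n m r

/-- Δ' = ∂_{x₀}² + 2Δ -/
def Δ' : Module.End ℂ (SAlgB n m) := pdx0 n m ∘ₗ pdx0 n m + (2 : ℂ) • ΔS n m
/-- η' = multiplication by x₀² + 2η -/
def η'op : Module.End ℂ (SAlgB n m) :=
  LinearMap.mulLeft ℂ ((x0v n ^ 2) ⊗ₜ[ℂ] (1 : ExtA m) + (2 : ℂ) • ηelt n m)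

/-!
Both operators split along `B = ℂ[x₀, x, y] ⊗ Λ(θ, ϑ)` as `f ⊗ 1 + 1 ⊗ g`, and operators acting on
different tensor factors commute, so `[Δ', η']` is the sum of a polynomial and an exterior-algebra
commutator. In each factor `Δ` and `η` are sums of products `D₁D₂` and `M₁M₂` whose factors obey
the canonical relations `DᵢMⱼ ∓ MⱼDᵢ = δᵢⱼ`; one identity for `[D₁D₂, M₁M₂]` gives
`2 + 4x₀∂_{x₀}` for `x₀²`, `1 + x∂_x + y∂_y` for each `xy`, `-1 + θ∂_θ + ϑ∂_ϑ` for each `θϑ`, and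
`0` for unrelated pairs; the constants add up to `2 + 4(n - m)`.
-/

attribute [local instance 100] LieRing.ofAssociativeRing

open LinearMap

theorem lie_mul_mul_of_signed_comm {R A : Type*} [CommRing R] [Ring A] [Algebra R A]
    {ε c₁₁ c₁₂ c₂₁ c₂₂ : R} (hε : ε = 1 ∨ ε = -1) {D₁ D₂ M₁ M₂ : A}
    (h₁₁ : D₁ * M₁ = c₁₁ • 1 + ε • (M₁ * D₁)) (h₁₂ : D₁ * M₂ = c₁₂ • 1 + ε • (M₂ * D₁))
    (h₂₁ : D₂ * M₁ = c₂₁ • 1 + ε • (M₁ * D₂)) (h₂₂ : D₂ * M₂ = c₂₂ • 1 + ε • (M₂ * D₂)) :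
    ⁅D₁ * D₂, M₁ * M₂⁆ = (c₂₁ * c₁₂ + ε * c₁₁ * c₂₂) • 1 + c₁₁ • (M₂ * D₂) + c₂₂ • (M₁ * D₁)
      + (ε * c₂₁) • (M₂ * D₁) + (ε * c₁₂) • (M₁ * D₂) := by
  have e₁ : D₁ * D₂ * (M₁ * M₂) = c₂₁ • (D₁ * M₂) + ε • (D₁ * M₁ * (D₂ * M₂)) := by
    rw [mul_assoc, ← mul_assoc D₂, h₂₁]
    simp only [add_mul, mul_add, smul_mul_assoc, mul_smul_comm, one_mul, mul_assoc]
  have e₂ : M₁ * D₁ * M₂ * D₂ = c₁₂ • (M₁ * D₂) + ε • (M₁ * M₂ * (D₁ * D₂)) := by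
    rw [mul_assoc M₁, h₁₂]
    simp only [add_mul, mul_add, smul_mul_assoc, mul_smul_comm, mul_one, mul_assoc]
  rw [Ring.lie_def, e₁, h₁₁, h₁₂, h₂₂]
  simp only [add_mul, mul_add, smul_mul_assoc, mul_smul_comm, one_mul, mul_one, ← mul_assoc, e₂]
  rcases hε with rfl | rfl <;> module

theorem lie_sum_sum_of_pairwise {ι L : Type*} [Fintype ι] [LieRing L] {a b : ι → L}
    (h : Pairwise fun i j ↦ ⁅a i, b j⁆ = 0) : ⁅∑ i, a i, ∑ j, b j⁆ = ∑ i, ⁅a i, b i⁆ := by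
  rw [sum_lie]
  refine Finset.sum_congr rfl fun i _ ↦ ?_
  rw [lie_sum, Finset.sum_eq_single i (fun j _ hji ↦ h hji.symm) (by simp)]

namespace Module.End

variable {R M : Type*} [CommRing R] [AddCommGroup M] [Module R M]

-- `rw`/`simp` cannot use `_root_.smul_lie` here: its scalar action comes from
-- `LieAlgebra.ofAssociativeAlgebra` and agrees with that of `Module.End` only after unfolding
-- beyond instance transparency.
theorem smul_lie (c : R) (a b : Module.End R M) : ⁅c • a, b⁆ = c • ⁅a, b⁆ :=
  _root_.smul_lie c a b

theorem lie_smul (c : R) (a b : Module.End R M) : ⁅a, c • b⁆ = c • ⁅a, b⁆ :=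
  _root_.lie_smul c a b

end Module.End

section TensorProduct

variable {R M N : Type*} [CommRing R] [AddCommGroup M] [Module R M] [AddCommGroup N] [Module R N]

theorem lie_rTensor_lTensor (f : Module.End R M) (g : Module.End R N) :
    ⁅f.rTensor N, g.lTensor M⁆ = 0 := by
  rw [Ring.lie_def, Module.End.mul_eq_comp, Module.End.mul_eq_comp, rTensor_comp_lTensor,
    lTensor_comp_rTensor, sub_self]

theorem rTensor_lie (f f' : Module.End R M) :
    ⁅f, f'⁆.rTensor N = ⁅f.rTensor N, f'.rTensor N⁆ := by
  rw [Ring.lie_def, Ring.lie_def, rTensor_sub, rTensor_mul, rTensor_mul]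

theorem lTensor_lie (g g' : Module.End R N) :
    ⁅g, g'⁆.lTensor M = ⁅g.lTensor M, g'.lTensor M⁆ := by
  rw [Ring.lie_def, Ring.lie_def, lTensor_sub, lTensor_mul, lTensor_mul]

theorem lie_rTensor_add_lTensor (f f' : Module.End R M) (g g' : Module.End R N) :
    ⁅f.rTensor N + g.lTensor M, f'.rTensor N + g'.lTensor M⁆
      = ⁅f, f'⁆.rTensor N + ⁅g, g'⁆.lTensor M := by
  rw [add_lie, lie_add, lie_add, lie_rTensor_lTensor, ← lie_skew (g.lTensor M),
    lie_rTensor_lTensor, rTensor_lie, lTensor_lie]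
  abel

end TensorProduct

section TensorAlgebra

variable {R A B : Type*} [CommRing R] [Ring A] [Algebra R A] [Ring B] [Algebra R B]

theorem mulLeft_tmul_one (a : A) : mulLeft R (a ⊗ₜ[R] (1 : B)) = (mulLeft R a).rTensor B := by
  ext x y; simp

theorem mulLeft_one_tmul (b : B) : mulLeft R ((1 : A) ⊗ₜ[R] b) = (mulLeft R b).lTensor A := by
  ext x y; simp

end TensorAlgebra

theorem Derivation.lie_mulLeft {R A : Type*} [CommRing R] [CommRing A] [Algebra R A]
    (D : Derivation R A A) (a : A) : ⁅(D : Module.End R A), mulLeft R a⁆ = mulLeft R (D a) := by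
  ext b; simp [Ring.lie_def, D.leibniz, mul_comm]

namespace MvPolynomial

variable {σ R : Type*} [CommRing R] [DecidableEq σ]

local notation "∂" i => ((pderiv i : Derivation R (MvPolynomial σ R) (MvPolynomial σ R)) :
  Module.End R (MvPolynomial σ R))

local notation "𝐗" i => mulLeft R (X i : MvPolynomial σ R)

local notation "δ[" i ", " j "]" => (Pi.single i 1 : σ → R) j

theorem pderiv_mul_mulLeft_X (i j : σ) :
    (∂ i) * (𝐗 j) = δ[i, j] • 1 + (1 : R) • ((𝐗 j) * ∂ i) := by
  have h := (pderiv i : Derivation R (MvPolynomial σ R) _).lie_mulLeft (X j)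
  rw [Ring.lie_def, sub_eq_iff_eq_add] at h
  rw [one_smul, h, pderiv_X]
  by_cases hij : i = j
  · subst hij; simp [mulLeft_one, Module.End.one_eq_id]
  · simp [Pi.single_eq_of_ne' hij, mulLeft_zero_eq_zero]

theorem lie_pderiv_mul_pderiv_mulLeft_X_mul (a b c d : σ) :
    ⁅(∂ a) * ∂ b, (𝐗 c) * 𝐗 d⁆
      = (δ[b, c] * δ[a, d] + δ[a, c] * δ[b, d]) • 1
        + δ[a, c] • ((𝐗 d) * ∂ b) + δ[b, d] • ((𝐗 c) * ∂ a)
        + δ[b, c] • ((𝐗 d) * ∂ a) + δ[a, d] • ((𝐗 c) * ∂ b) := by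
  rw [lie_mul_mul_of_signed_comm (Or.inl rfl) (pderiv_mul_mulLeft_X a c)
    (pderiv_mul_mulLeft_X a d) (pderiv_mul_mulLeft_X b c) (pderiv_mul_mulLeft_X b d)]
  simp only [one_mul]

end MvPolynomial

namespace CliffordAlgebra

variable {R M : Type*} [CommRing R] [AddCommGroup M] [Module R M] {Q : QuadraticForm R M}

theorem contractLeft_mul_mulLeft_ι (f : Module.Dual R M) (v : M) :
    contractLeft (Q := Q) f * mulLeft R (ι Q v)
      = f v • 1 + (-1 : R) • (mulLeft R (ι Q v) * contractLeft f) := by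
  ext x; simp [contractLeft_ι_mul, sub_eq_add_neg]

theorem lie_contractLeft_mul_contractLeft_mulLeft_ι_mul (f g : Module.Dual R M) (v w : M) :
    ⁅contractLeft (Q := Q) f * contractLeft g, mulLeft R (ι Q v) * mulLeft R (ι Q w)⁆
      = (g v * f w - f v * g w) • 1 + f v • (mulLeft R (ι Q w) * contractLeft g)
        + g w • (mulLeft R (ι Q v) * contractLeft f) - g v • (mulLeft R (ι Q w) * contractLeft f)
        - f w • (mulLeft R (ι Q v) * contractLeft g) := by
  rw [lie_mul_mul_of_signed_comm (Or.inr rfl) (contractLeft_mul_mulLeft_ι f v)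
    (contractLeft_mul_mulLeft_ι f w) (contractLeft_mul_mulLeft_ι g v)
    (contractLeft_mul_mulLeft_ι g w)]
  module

end CliffordAlgebra

section Bosonic

local notation "∂" i => ((pderiv i : Derivation ℂ (PolyB n) (PolyB n)) : Module.End ℂ (PolyB n))

def Δpoly : Module.End ℂ (PolyB n) :=
  (∂ Sum.inl 0) * (∂ Sum.inl 0) + (2 : ℂ) • ∑ i : Fin n, (∂ Sum.inl i.succ) * ∂ Sum.inr i

def ηpoly : Module.End ℂ (PolyB n) :=
  mulLeft ℂ (x0v n ^ 2 + (2 : ℂ) • ∑ i : Fin n, xv n i * yv n i)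

def eulerPoly : Module.End ℂ (PolyB n) :=
  mulLeft ℂ (x0v n) * (∂ Sum.inl 0)
    + ∑ i : Fin n, (mulLeft ℂ (xv n i) * (∂ Sum.inl i.succ) + mulLeft ℂ (yv n i) * ∂ Sum.inr i)

theorem lie_Δpoly_ηpoly :
    ⁅Δpoly n, ηpoly n⁆ = ((2 : ℂ) + 4 * n) • 1 + (4 : ℂ) • eulerPoly n := by
  have hη : ηpoly n = mulLeft ℂ (x0v n) * mulLeft ℂ (x0v n)
      + (2 : ℂ) • ∑ i : Fin n, mulLeft ℂ (xv n i) * mulLeft ℂ (yv n i) := by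
    change Algebra.lmul ℂ _ _ = _
    simp only [map_add, map_smul, map_sum, map_mul, pow_two]
    rfl
  have h₀₀ : ⁅(∂ Sum.inl 0) * (∂ Sum.inl 0), mulLeft ℂ (x0v n) * mulLeft ℂ (x0v n)⁆
      = (2 : ℂ) • 1 + (4 : ℂ) • (mulLeft ℂ (x0v n) * ∂ Sum.inl 0) := by
    rw [x0v, lie_pderiv_mul_pderiv_mulLeft_X_mul]
    simp only [Pi.single_eq_same]
    module
  have h₀ᵢ (i : Fin n) :
      ⁅(∂ Sum.inl 0) * (∂ Sum.inl 0), mulLeft ℂ (xv n i) * mulLeft ℂ (yv n i)⁆ = 0 := by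
    simp [xv, yv, lie_pderiv_mul_pderiv_mulLeft_X_mul, Fin.succ_ne_zero]
  have hᵢ₀ (i : Fin n) :
      ⁅(∂ Sum.inl i.succ) * (∂ Sum.inr i), mulLeft ℂ (x0v n) * mulLeft ℂ (x0v n)⁆ = 0 := by
    simp [x0v, lie_pderiv_mul_pderiv_mulLeft_X_mul, Fin.succ_ne_zero]
  have hᵢᵢ (i : Fin n) :
      ⁅(∂ Sum.inl i.succ) * (∂ Sum.inr i), mulLeft ℂ (xv n i) * mulLeft ℂ (yv n i)⁆
        = 1 + mulLeft ℂ (xv n i) * (∂ Sum.inl i.succ) + mulLeft ℂ (yv n i) * ∂ Sum.inr i := by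
    rw [xv, yv, lie_pderiv_mul_pderiv_mulLeft_X_mul]
    simp only [ne_eq, reduceCtorEq, not_false_eq_true, Pi.single_eq_of_ne, mul_zero,
      Pi.single_eq_same, mul_one, zero_add, one_smul, zero_smul, add_zero]
    abel
  have hᵢⱼ : Pairwise fun i j : Fin n ↦
      ⁅(∂ Sum.inl i.succ) * (∂ Sum.inr i), mulLeft ℂ (xv n j) * mulLeft ℂ (yv n j)⁆ = 0 := by
    intro i j hij
    simp [xv, yv, lie_pderiv_mul_pderiv_mulLeft_X_mul, Ne.symm hij]
  rw [Δpoly, hη, add_lie, lie_add, lie_add]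
  simp only [Module.End.smul_lie, Module.End.lie_smul]
  rw [sum_lie, lie_sum, lie_sum_sum_of_pairwise hᵢⱼ, h₀₀]
  simp only [h₀ᵢ, hᵢ₀, hᵢᵢ, Finset.sum_const_zero, Finset.sum_add_distrib, Finset.sum_const,
    Finset.card_univ, Fintype.card_fin, eulerPoly]
  rw [← Nat.cast_smul_eq_nsmul ℂ]
  module

end Bosonic

section Fermionic

def Δext : Module.End ℂ (ExtA m) := (2 : ℂ) • ∑ r : Fin m, dθ m r * dϑ m r

def ηext : Module.End ℂ (ExtA m) := mulLeft ℂ ((2 : ℂ) • ∑ r : Fin m, θv m r * ϑv m r)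

def eulerExt : Module.End ℂ (ExtA m) :=
  ∑ r : Fin m, (mulLeft ℂ (θv m r) * dθ m r + mulLeft ℂ (ϑv m r) * dϑ m r)

theorem lie_Δext_ηext : ⁅Δext m, ηext m⁆ = (-4 * m : ℂ) • 1 + (4 : ℂ) • eulerExt m := by
  have hη : ηext m = (2 : ℂ) • ∑ r : Fin m, mulLeft ℂ (θv m r) * mulLeft ℂ (ϑv m r) := by
    change Algebra.lmul ℂ _ _ = _
    simp only [map_smul, map_sum, map_mul]
    rfl
  have hᵣᵣ (r : Fin m) : ⁅dθ m r * dϑ m r, mulLeft ℂ (θv m r) * mulLeft ℂ (ϑv m r)⁆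
      = -1 + mulLeft ℂ (θv m r) * dθ m r + mulLeft ℂ (ϑv m r) * dϑ m r := by
    rw [dθ, dϑ, θv, ϑv, CliffordAlgebra.lie_contractLeft_mul_contractLeft_mulLeft_ι_mul]
    simp only [coe_proj, Function.eval, ne_eq, reduceCtorEq, not_false_eq_true,
      Pi.single_eq_of_ne, mul_zero, Pi.single_eq_same, mul_one, zero_sub, neg_smul, one_smul,
      zero_smul, sub_zero]
    abel
  have hᵣₛ : Pairwise fun r s : Fin m ↦
      ⁅dθ m r * dϑ m r, mulLeft ℂ (θv m s) * mulLeft ℂ (ϑv m s)⁆ = 0 := by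
    intro r s hrs
    rw [dθ, dϑ, θv, ϑv, CliffordAlgebra.lie_contractLeft_mul_contractLeft_mulLeft_ι_mul]
    simp [Ne.symm hrs]
  rw [Δext, hη, Module.End.smul_lie, Module.End.lie_smul, lie_sum_sum_of_pairwise hᵣₛ]
  simp only [hᵣᵣ, Finset.sum_add_distrib, Finset.sum_const, Finset.card_univ, Fintype.card_fin,
    eulerExt]
  rw [← Nat.cast_smul_eq_nsmul ℂ]
  module

end Fermionic

theorem Δ'_eq_rTensor_add_lTensor :
    Δ' n m = (Δpoly n).rTensor (ExtA m) + (Δext m).lTensor (PolyB n) := by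
  change _ = Module.End.rTensorAlgHom ℂ _ _ (Δpoly n) + Module.End.lTensorAlgHom ℂ _ _ (Δext m)
  simp only [Δpoly, Δext, map_add, map_smul, map_sum, map_mul]
  rw [Δ', ΔS, smul_add, add_assoc]
  rfl

theorem η'op_eq_rTensor_add_lTensor :
    η'op n m = (ηpoly n).rTensor (ExtA m) + (ηext m).lTensor (PolyB n) := by
  have h : (x0v n ^ 2) ⊗ₜ[ℂ] (1 : ExtA m) + (2 : ℂ) • ηelt n m
      = (x0v n ^ 2 + (2 : ℂ) • ∑ i : Fin n, xv n i * yv n i) ⊗ₜ[ℂ] (1 : ExtA m)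
        + (1 : PolyB n) ⊗ₜ[ℂ] ((2 : ℂ) • ∑ r : Fin m, θv m r * ϑv m r) := by
    rw [ηelt, add_tmul, ← smul_tmul', tmul_smul, sum_tmul, tmul_sum, smul_add, add_assoc]
  rw [η'op, h, ηpoly, ηext, ← mulLeft_tmul_one, ← mulLeft_one_tmul]
  exact map_add (Algebra.lmul ℂ (SAlgB n m)) _ _

theorem euler_eq_rTensor_add_lTensor :
    mx0 n m ∘ₗ pdx0 n m
        + (∑ i : Fin n, (mx n m i ∘ₗ pdx n m i + my n m i ∘ₗ pdy n m i))
        + ∑ r : Fin m, (mθ n m r ∘ₗ pdθ n m r + mϑ n m r ∘ₗ pdϑ n m r)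
      = (eulerPoly n).rTensor (ExtA m) + (eulerExt m).lTensor (PolyB n) := by
  simp only [mx0, mx, my, mθ, mϑ, mulLeft_tmul_one, mulLeft_one_tmul]
  change _ = Module.End.rTensorAlgHom ℂ _ _ (eulerPoly n)
    + Module.End.lTensorAlgHom ℂ _ _ (eulerExt m)
  simp only [eulerPoly, eulerExt, map_add, map_sum, map_mul]
  rfl

theorem osp_odd_commutator :
    Δ' n m ∘ₗ η'op n m - η'op n m ∘ₗ Δ' n m
      = ((2 : ℂ) + 4 * ((n : ℂ) - m)) • (1 : Module.End ℂ (SAlgB n m))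
        + (4 : ℂ) • (mx0 n m ∘ₗ pdx0 n m
            + (∑ i : Fin n, (mx n m i ∘ₗ pdx n m i + my n m i ∘ₗ pdy n m i))
            + ∑ r : Fin m, (mθ n m r ∘ₗ pdθ n m r + mϑ n m r ∘ₗ pdϑ n m r)) := by
  calc Δ' n m ∘ₗ η'op n m - η'op n m ∘ₗ Δ' n m = ⁅Δ' n m, η'op n m⁆ := rfl
    _ = ⁅Δpoly n, ηpoly n⁆.rTensor (ExtA m) + ⁅Δext m, ηext m⁆.lTensor (PolyB n) := by
      rw [Δ'_eq_rTensor_add_lTensor, η'op_eq_rTensor_add_lTensor, lie_rTensor_add_lTensor]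
    _ = _ := by
      rw [lie_Δpoly_ηpoly, lie_Δext_ηext, euler_eq_rTensor_add_lTensor]
      simp only [rTensor_add, rTensor_smul, lTensor_add, lTensor_smul, Module.End.one_eq_id,
        rTensor_id, lTensor_id]
      module
end
end

section
/- Let T₀ = Σ_{i=0}^∞ ((−2)^i x_0^{2i}/(2i)!)·Δ^i and T₁ = Σ_{i=0}^∞ ((−2)^i x_0^{2i+1}/(2i+1)!)·Δ^i, as operators on B = ℂ[x_0] ⊗ A (the sums are locally finite since Δ is locally nilpotent on A). Then for every g in A, Δ'(T₀(g)) = 0 and Δ'(T₁(g)) = 0, where Δ' = ∂_{x_0}² + 2Δ. -/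
open TensorProduct MvPolynomial

noncomputable section

variable (n m : ℕ)

/-- T₀(g) = Σ_i ((−2)^i x₀^{2i}/(2i)!)·Δ^i(g); the sum is finite since Δ is
locally nilpotent on A. -/
def T0 (g : SAlgB n m) : SAlgB n m :=
  ∑ᶠ i : ℕ, ((-2 : ℂ) ^ i / (2 * i).factorial) • (mx0 n m ^ (2 * i)) ((ΔS n m ^ i) g)

/-- T₁(g) = Σ_i ((−2)^i x₀^{2i+1}/(2i+1)!)·Δ^i(g) -/
def T1 (g : SAlgB n m) : SAlgB n m :=
  ∑ᶠ i : ℕ, ((-2 : ℂ) ^ i / (2 * i + 1).factorial) • (mx0 n m ^ (2 * i + 1)) ((ΔS n m ^ i) g)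

/-!
With `D = ∂_{x₀}`, `X` = multiplication by `x₀` and `L = Δ` one has `[D, X] = 1`,
`[D, L] = [X, L] = 0` and `D g = 0`. In `Tₚ g = Σᵢ cᵢ X^(2i+p) Lⁱ g` with `cᵢ = (-2)ⁱ/(2i+p)!`
the coefficients are chosen so that `D²` of the `(i+1)`-st summand is `-2L` of the `i`-th one,
while `D²` kills the `0`-th summand because `p ≤ 1`. Hence `Δ' = D² + 2L` telescopes on partial
sums to `2L` of the last summand, which vanishes once the series has terminated.
-/

open Finset

theorem MvPolynomial.commute_pderiv {σ R : Type*} [CommRing R] (i j : σ) :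
    Commute (pderiv (R := R) i : Module.End R (MvPolynomial σ R))
      (pderiv (R := R) j : Module.End R _) := by
  classical
  have hbracket :
      ⁅pderiv i, pderiv j⁆ = (0 : Derivation R (MvPolynomial σ R) (MvPolynomial σ R)) :=
    derivation_ext fun k => by
      rw [Derivation.commutator_apply]
      simp only [pderiv_X, Pi.single_apply]
      split_ifs <;> simp
  refine LinearMap.ext fun p => ?_
  simpa [Derivation.commutator_apply, sub_eq_zero] using congr($hbracket p)

theorem MvPolynomial.commute_mulLeft_X_pderiv {σ R : Type*} [CommRing R] {i j : σ} (h : i ≠ j) :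
    Commute (LinearMap.mulLeft R (X i : MvPolynomial σ R)) (pderiv (R := R) j : Module.End R _) :=
  LinearMap.ext fun p => by simp [pderiv_X_of_ne h]

theorem MvPolynomial.pderiv_mul_mulLeft_X_s15 {σ R : Type*} [CommRing R] (i : σ) :
    (pderiv (R := R) i : Module.End R (MvPolynomial σ R)) * LinearMap.mulLeft R (X i)
      = LinearMap.mulLeft R (X i) * (pderiv (R := R) i : Module.End R _) + 1 :=
  LinearMap.ext fun p => by simp [add_comm]

theorem LinearMap.commute_rTensor_rTensor {R M N : Type*} [CommSemiring R] [AddCommMonoid M]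
    [Module R M] [AddCommMonoid N] [Module R N] {f g : Module.End R M} (h : Commute f g) :
    Commute (f.rTensor N) (g.rTensor N) := by
  rw [Commute, SemiconjBy, ← rTensor_mul, ← rTensor_mul, h.eq]

theorem LinearMap.commute_rTensor_lTensor {R M N : Type*} [CommSemiring R] [AddCommMonoid M]
    [Module R M] [AddCommMonoid N] [Module R N] (f : Module.End R M) (g : Module.End R N) :
    Commute (f.rTensor N) (g.lTensor M) :=
  (rTensor_comp_lTensor (f := f) (g := g)).trans (lTensor_comp_rTensor (f := f) (g := g)).symm

section WeylRelation

theorem mul_pow_succ_of_mul_eq_add_one {R : Type*} [Ring R] {D X : R} (h : D * X = X * D + 1)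
    (k : ℕ) :
    D * X ^ (k + 1) = X ^ (k + 1) * D + (k + 1 : ℕ) * X ^ k := by
  induction k with
  | zero => simpa using h
  | succ k ih =>
    rw [pow_succ X (k + 1), ← mul_assoc, ih, add_mul, mul_assoc, h, mul_assoc, ← pow_succ,
      Nat.cast_succ (k + 1)]
    noncomm_ring

variable {K W : Type*} [CommRing K] [AddCommGroup W] [Module K W] {D X L : Module.End K W}

theorem apply_pow_succ_apply_of_mul_eq_add_one (h : D * X = X * D + 1) {v : W} (hv : D v = 0)
    (k : ℕ) : D ((X ^ (k + 1)) v) = (k + 1 : K) • (X ^ k) v := by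
  rw [← Module.End.mul_apply, mul_pow_succ_of_mul_eq_add_one h, LinearMap.add_apply,
    Module.End.mul_apply, hv, map_zero, zero_add, Module.End.mul_apply, Module.End.natCast_apply,
    ← Nat.cast_smul_eq_nsmul K, Nat.cast_succ]

theorem apply_apply_pow_add_two_apply_of_mul_eq_add_one (h : D * X = X * D + 1) {v : W}
    (hv : D v = 0) (k : ℕ) :
    D (D ((X ^ (k + 2)) v)) = (((k : K) + 2) * ((k : K) + 1)) • (X ^ k) v := by
  rw [apply_pow_succ_apply_of_mul_eq_add_one h hv, map_smul,
    apply_pow_succ_apply_of_mul_eq_add_one h hv, smul_smul, Nat.cast_succ]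
  ring_nf

end WeylRelation

section HarmonicSeries

variable {K W : Type*} [Field K] [CharZero K] [AddCommGroup W] [Module K W]
  {D X L : Module.End K W}

theorem neg_two_pow_succ_div_factorial_add_two_mul (i n : ℕ) :
    (-2 : K) ^ (i + 1) / (n + 2).factorial * ((n : K) + 2) * ((n : K) + 1)
      = -2 * ((-2 : K) ^ i / n.factorial) := by
  have hn1 : (n : K) + 1 ≠ 0 := n.cast_add_one_ne_zero
  have hn2 : (n : K) + 2 ≠ 0 := by exact_mod_cast (n + 1).succ_ne_zero
  have hf : (n.factorial : K) ≠ 0 := Nat.cast_ne_zero.2 n.factorial_ne_zero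
  have hfac : ((n + 2).factorial : K) = ((n : K) + 2) * ((n : K) + 1) * n.factorial := by
    push_cast [Nat.factorial_succ]
    ring
  rw [hfac]
  field_simp
  ring

variable (X L) in
def harmonicTerm (g : W) (p i : ℕ) : W :=
  ((-2 : K) ^ i / (2 * i + p).factorial) • (X ^ (2 * i + p)) ((L ^ i) g)

theorem apply_apply_harmonicTerm_zero (hDX : D * X = X * D + 1) {g : W} (hg : D g = 0) {p : ℕ}
    (hp : p ≤ 1) : D (D (harmonicTerm X L g p 0)) = 0 := by
  interval_cases p
  · simp [harmonicTerm, hg]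
  · have hDXg : D (X g) = g := by simpa [hg] using congr($hDX g)
    simp [harmonicTerm, hDXg, hg]

theorem apply_apply_harmonicTerm_succ (hDX : D * X = X * D + 1) (hXL : Commute X L)
    (hDL : Commute D L) {g : W} (hg : D g = 0) (p i : ℕ) :
    D (D (harmonicTerm X L g p (i + 1))) = (-2 : K) • L (harmonicTerm X L g p i) := by
  have hDLg : D ((L ^ (i + 1)) g) = 0 := by
    rw [← Module.End.mul_apply, (hDL.pow_right _).eq, Module.End.mul_apply, hg, map_zero]
  have hLX : L ((X ^ (2 * i + p)) ((L ^ i) g)) = (X ^ (2 * i + p)) ((L ^ (i + 1)) g) := by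
    rw [← Module.End.mul_apply, ← (hXL.pow_left _).eq, Module.End.mul_apply, pow_succ',
      Module.End.mul_apply]
  rw [harmonicTerm, harmonicTerm, show 2 * (i + 1) + p = 2 * i + p + 2 by ring, map_smul, map_smul,
    apply_apply_pow_add_two_apply_of_mul_eq_add_one hDX hDLg, smul_smul, map_smul, hLX, smul_smul,
    ← mul_assoc, neg_two_pow_succ_div_factorial_add_two_mul]

theorem map_sum_range_harmonicTerm (hDX : D * X = X * D + 1) (hXL : Commute X L)
    (hDL : Commute D L) {g : W} (hg : D g = 0) {p : ℕ} (hp : p ≤ 1) (N : ℕ) :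
    (D * D + (2 : K) • L) (∑ i ∈ range (N + 1), harmonicTerm X L g p i)
      = (2 : K) • L (harmonicTerm X L g p N) := by
  induction N with
  | zero => simp [apply_apply_harmonicTerm_zero hDX hg hp]
  | succ N ih =>
    rw [sum_range_succ, map_add, ih, LinearMap.add_apply, Module.End.mul_apply,
      apply_apply_harmonicTerm_succ hDX hXL hDL hg, LinearMap.smul_apply]
    simp only [neg_smul, add_neg_cancel_left]

theorem map_finsum_harmonicTerm (hDX : D * X = X * D + 1) (hXL : Commute X L)
    (hDL : Commute D L) {g : W} (hg : D g = 0) {p : ℕ} (hp : p ≤ 1) :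
    (D * D + (2 : K) • L) (∑ᶠ i, harmonicTerm X L g p i) = 0 := by
  -- `∑ᶠ` over an infinite support is `0`, so local nilpotence of `L` is never needed.
  by_cases hfin : (Function.support (harmonicTerm X L g p)).Finite
  · obtain ⟨N, hN⟩ := hfin.bddAbove
    have hvanish : harmonicTerm X L g p (N + 1) = 0 :=
      Function.notMem_support.1 fun h => (hN h).not_gt N.lt_succ_self
    have hsupp : Function.support (harmonicTerm X L g p) ⊆ range (N + 1 + 1) := fun i hi => by
      simpa [Nat.lt_succ_iff] using (hN hi).trans N.le_succ
    rw [finsum_eq_sum_of_support_subset _ hsupp,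
      map_sum_range_harmonicTerm hDX hXL hDL hg hp, hvanish, map_zero, smul_zero]
  · rw [finsum_of_infinite_support hfin, map_zero]

end HarmonicSeries

theorem mx0_eq_rTensor : mx0 n m = (LinearMap.mulLeft ℂ (x0v n)).rTensor (ExtA m) :=
  TensorProduct.ext' fun p a => by simp [mx0, Algebra.TensorProduct.tmul_mul_tmul]

theorem pdx0_mul_mx0 : pdx0 n m * mx0 n m = mx0 n m * pdx0 n m + 1 := by
  rw [mx0_eq_rTensor, pdx0, ← LinearMap.rTensor, ← LinearMap.rTensor_mul, x0v,
    pderiv_mul_mulLeft_X_s15, LinearMap.rTensor_add, LinearMap.rTensor_mul, Module.End.one_eq_id,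
    LinearMap.rTensor_id, ← Module.End.one_eq_id]

theorem commute_rTensor_ΔS (f : Module.End ℂ (PolyB n))
    (hf : ∀ j : Fin (n + 1) ⊕ Fin n, j ≠ Sum.inl 0 →
      Commute f (pderiv (R := ℂ) j : Module.End ℂ (PolyB n))) :
    Commute (f.rTensor (ExtA m)) (ΔS n m) := by
  refine (Commute.sum_right _ _ _ fun i _ => ?_).add_right (Commute.sum_right _ _ _ fun r _ => ?_)
  · exact (LinearMap.commute_rTensor_rTensor (hf _ (by simp))).mul_right
      (LinearMap.commute_rTensor_rTensor (hf _ (by simp)))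
  · exact (LinearMap.commute_rTensor_lTensor f _).mul_right (LinearMap.commute_rTensor_lTensor f _)

theorem commute_mx0_ΔS : Commute (mx0 n m) (ΔS n m) := by
  rw [mx0_eq_rTensor]
  exact commute_rTensor_ΔS n m _ fun _ hj => commute_mulLeft_X_pderiv hj.symm

theorem commute_pdx0_ΔS : Commute (pdx0 n m) (ΔS n m) :=
  commute_rTensor_ΔS n m _ fun j _ => commute_pderiv _ j

/-- For g in A (i.e. not involving x₀), Δ'(T₀ g) = 0 and Δ'(T₁ g) = 0. -/
theorem T_harmonic (g : SAlgB n m) (hg : pdx0 n m g = 0) :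
    Δ' n m (T0 n m g) = 0 ∧ Δ' n m (T1 n m g) = 0 :=
  ⟨map_finsum_harmonicTerm (pdx0_mul_mx0 n m) (commute_mx0_ΔS n m) (commute_pdx0_ΔS n m) hg
      (p := 0) zero_le_one,
    map_finsum_harmonicTerm (pdx0_mul_mx0 n m) (commute_mx0_ΔS n m) (commute_pdx0_ΔS n m) hg
      (p := 1) le_rfl⟩
end
end

section
/- Let g ∈ A satisfy Δ(g) = 0 and let g be a joint degree eigenvector with total degree eigenvalue k (i.e. [Σ_i (x_i∂_{x_i}+y_i∂_{y_i}) + Σ_r (θ_r∂_{θ_r}+ϑ_r∂_{ϑ_r})](g) = k·g). Then for every positive integer ℓ, Δ'((η')^ℓ g) = 2ℓ·(1 + 2(n − m + k + ℓ − 1))·(η')^{ℓ−1} g, where Δ' = ∂_{x_0}² + 2Δ and η' = x_0² + 2η on B = A[x_0]. -/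
open TensorProduct MvPolynomial

noncomputable section

variable (n m : ℕ)

/-- total degree operator on A (excluding x₀) -/
def degA : Module.End ℂ (SAlgB n m) :=
  (∑ i : Fin n, (mx n m i ∘ₗ pdx n m i + my n m i ∘ₗ pdy n m i))
    + ∑ r : Fin m, (mθ n m r ∘ₗ pdθ n m r + mϑ n m r ∘ₗ pdϑ n m r)

open TensorProduct MvPolynomial

lemma dθ_mul_θ (r s : Fin m) (a : ExtA m) :
    dθ m r (θv m s * a) = (if r = s then (1:ℂ) else 0) • a - θv m s * dθ m r a := by
  unfold dθ θv
  rw [CliffordAlgebra.contractLeft_ι_mul]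
  congr 1
  simp [Pi.single_apply, eq_comm]

lemma dθ_mul_ϑ (r s : Fin m) (a : ExtA m) :
    dθ m r (ϑv m s * a) = - (ϑv m s * dθ m r a) := by
  unfold dθ ϑv
  rw [CliffordAlgebra.contractLeft_ι_mul]
  simp

lemma dϑ_mul_θ (r s : Fin m) (a : ExtA m) :
    dϑ m r (θv m s * a) = - (θv m s * dϑ m r a) := by
  unfold dϑ θv
  rw [CliffordAlgebra.contractLeft_ι_mul]
  simp

lemma dϑ_mul_ϑ (r s : Fin m) (a : ExtA m) :
    dϑ m r (ϑv m s * a) = (if r = s then (1:ℂ) else 0) • a - ϑv m s * dϑ m r a := by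
  unfold dϑ ϑv
  rw [CliffordAlgebra.contractLeft_ι_mul]
  congr 1
  simp [Pi.single_apply, eq_comm]

lemma dθ_mul_θϑ (r s : Fin m) (a : ExtA m) :
    dθ m r ((θv m s * ϑv m s) * a)
      = (θv m s * ϑv m s) * dθ m r a + (if r = s then (1:ℂ) else 0) • (ϑv m s * a) := by
  rw [mul_assoc, dθ_mul_θ, dθ_mul_ϑ, mul_neg, sub_neg_eq_add, mul_assoc, add_comm]

lemma dϑ_mul_θϑ (r s : Fin m) (a : ExtA m) :
    dϑ m r ((θv m s * ϑv m s) * a)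
      = (θv m s * ϑv m s) * dϑ m r a - (if r = s then (1:ℂ) else 0) • (θv m s * a) := by
  rw [mul_assoc, dϑ_mul_θ, dϑ_mul_ϑ, mul_sub, mul_smul_comm, neg_sub, mul_assoc, sub_eq_sub_iff_sub_eq_sub]
  abel

lemma ι_comm_pair (a b c : (Fin m ⊕ Fin m) → ℂ) :
    ExteriorAlgebra.ι ℂ a * (ExteriorAlgebra.ι ℂ b * ExteriorAlgebra.ι ℂ c)
      = (ExteriorAlgebra.ι ℂ b * ExteriorAlgebra.ι ℂ c) * ExteriorAlgebra.ι ℂ a := by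
  have h : ∀ x y : (Fin m ⊕ Fin m) → ℂ,
      ExteriorAlgebra.ι ℂ x * ExteriorAlgebra.ι ℂ y = -(ExteriorAlgebra.ι ℂ y * ExteriorAlgebra.ι ℂ x) :=
    fun x y => eq_neg_of_add_eq_zero_left (ExteriorAlgebra.ι_add_mul_swap x y)
  calc ExteriorAlgebra.ι ℂ a * (ExteriorAlgebra.ι ℂ b * ExteriorAlgebra.ι ℂ c)
      = (ExteriorAlgebra.ι ℂ a * ExteriorAlgebra.ι ℂ b) * ExteriorAlgebra.ι ℂ c := (mul_assoc _ _ _).symm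
    _ = -(ExteriorAlgebra.ι ℂ b * ExteriorAlgebra.ι ℂ a) * ExteriorAlgebra.ι ℂ c := by rw [h]
    _ = -(ExteriorAlgebra.ι ℂ b * (ExteriorAlgebra.ι ℂ a * ExteriorAlgebra.ι ℂ c)) := by
        rw [neg_mul, mul_assoc]
    _ = -(ExteriorAlgebra.ι ℂ b * (-(ExteriorAlgebra.ι ℂ c * ExteriorAlgebra.ι ℂ a))) := by rw [h a c]
    _ = (ExteriorAlgebra.ι ℂ b * ExteriorAlgebra.ι ℂ c) * ExteriorAlgebra.ι ℂ a := by
        rw [mul_neg, neg_neg, mul_assoc]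
/-- abbreviation for the bosonic partial derivatives on the tensor algebra -/
def mapD (j : Fin (n + 1) ⊕ Fin n) : Module.End ℂ (SAlgB n m) :=
  TensorProduct.map ((pderiv j : Derivation ℂ (PolyB n) (PolyB n)) : PolyB n →ₗ[ℂ] PolyB n)
    LinearMap.id

lemma pdx0_eq : pdx0 n m = mapD n m (Sum.inl 0) := rfl
lemma pdx_eq (i : Fin n) : pdx n m i = mapD n m (Sum.inl i.succ) := rfl
lemma pdy_eq (i : Fin n) : pdy n m i = mapD n m (Sum.inr i) := rfl

lemma mapD_mul_poly (j : Fin (n + 1) ⊕ Fin n) (q : PolyB n) (u : SAlgB n m) :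
    mapD n m j ((q ⊗ₜ[ℂ] (1 : ExtA m)) * u)
      = ((pderiv j q) ⊗ₜ[ℂ] (1 : ExtA m)) * u + (q ⊗ₜ[ℂ] (1 : ExtA m)) * mapD n m j u := by
  induction u using TensorProduct.induction_on with
  | zero => simp
  | tmul p a =>
      simp only [mapD, TensorProduct.map_tmul, Algebra.TensorProduct.tmul_mul_tmul, pderiv_mul,
        add_tmul, LinearMap.id_coe, id_eq, Derivation.coeFn_coe, one_mul, mul_one]
  | add u v hu hv =>
      simp only [mul_add, map_add, hu, hv]
      abel

lemma mapD_mul_ext (j : Fin (n + 1) ⊕ Fin n) (w : ExtA m) (u : SAlgB n m) :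
    mapD n m j (((1 : PolyB n) ⊗ₜ[ℂ] w) * u) = ((1 : PolyB n) ⊗ₜ[ℂ] w) * mapD n m j u := by
  induction u using TensorProduct.induction_on with
  | zero => simp
  | tmul p a => simp [mapD, Algebra.TensorProduct.tmul_mul_tmul]
  | add u v hu hv => simp only [mul_add, map_add, hu, hv]

lemma mapF_mul_poly (F : Module.End ℂ (ExtA m)) (q : PolyB n) (u : SAlgB n m) :
    TensorProduct.map LinearMap.id F ((q ⊗ₜ[ℂ] (1 : ExtA m)) * u)
      = (q ⊗ₜ[ℂ] (1 : ExtA m)) * TensorProduct.map LinearMap.id F u := by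
  induction u using TensorProduct.induction_on with
  | zero => simp
  | tmul p a => simp [Algebra.TensorProduct.tmul_mul_tmul]
  | add u v hu hv => simp only [mul_add, map_add, hu, hv]

lemma pdθ_mul_θϑ (r s : Fin m) (u : SAlgB n m) :
    pdθ n m r (((1 : PolyB n) ⊗ₜ[ℂ] (θv m s * ϑv m s)) * u)
      = ((1 : PolyB n) ⊗ₜ[ℂ] (θv m s * ϑv m s)) * pdθ n m r u
        + (if r = s then (1:ℂ) else 0) • (((1 : PolyB n) ⊗ₜ[ℂ] ϑv m s) * u) := by
  induction u using TensorProduct.induction_on with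
  | zero => simp
  | tmul p a =>
      rcases eq_or_ne r s with h|h <;>
        simp [h, pdθ, Algebra.TensorProduct.tmul_mul_tmul, dθ_mul_θϑ, tmul_add, tmul_smul]
  | add u v hu hv =>
      simp only [mul_add, map_add, hu, hv, smul_add]
      abel

lemma pdϑ_mul_θϑ (r s : Fin m) (u : SAlgB n m) :
    pdϑ n m r (((1 : PolyB n) ⊗ₜ[ℂ] (θv m s * ϑv m s)) * u)
      = ((1 : PolyB n) ⊗ₜ[ℂ] (θv m s * ϑv m s)) * pdϑ n m r u
        - (if r = s then (1:ℂ) else 0) • (((1 : PolyB n) ⊗ₜ[ℂ] θv m s) * u) := by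
  induction u using TensorProduct.induction_on with
  | zero => simp
  | tmul p a =>
      rcases eq_or_ne r s with h|h <;>
        simp [h, pdϑ, Algebra.TensorProduct.tmul_mul_tmul, dϑ_mul_θϑ, tmul_sub, tmul_smul]
  | add u v hu hv =>
      simp only [mul_add, map_add, hu, hv, smul_add]
      abel

lemma pdθ_mul_θ (r : Fin m) (u : SAlgB n m) :
    pdθ n m r (((1 : PolyB n) ⊗ₜ[ℂ] θv m r) * u)
      = u - ((1 : PolyB n) ⊗ₜ[ℂ] θv m r) * pdθ n m r u := by
  induction u using TensorProduct.induction_on with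
  | zero => simp
  | tmul p a =>
      simp [pdθ, Algebra.TensorProduct.tmul_mul_tmul, dθ_mul_θ, tmul_sub]
  | add u v hu hv =>
      simp only [mul_add, map_add, hu, hv]
      abel
def Qpoly : PolyB n := x0v n ^ 2 + (2:ℂ) • ∑ i, xv n i * yv n i

lemma η'mul (u : SAlgB n m) :
    η'op n m u
      = (Qpoly n ⊗ₜ[ℂ] (1 : ExtA m)) * u
        + (2:ℂ) • ∑ s, ((1 : PolyB n) ⊗ₜ[ℂ] (θv m s * ϑv m s)) * u := by
  show ((x0v n ^ 2) ⊗ₜ[ℂ] (1 : ExtA m) + (2 : ℂ) • ηelt n m) * u = _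
  unfold Qpoly ηelt
  rw [show ((x0v n ^ 2 + (2:ℂ) • ∑ i, xv n i * yv n i) ⊗ₜ[ℂ] (1 : ExtA m))
      = (x0v n ^ 2) ⊗ₜ[ℂ] (1 : ExtA m)
        + (2:ℂ) • ∑ i, (xv n i * yv n i) ⊗ₜ[ℂ] (1 : ExtA m) by
    rw [add_tmul, ← smul_tmul', sum_tmul]]
  simp only [add_mul, smul_mul_assoc, Finset.sum_mul, smul_add, mul_add]
  abel

lemma pderiv_Qpoly_x0 : pderiv (Sum.inl 0) (Qpoly n) = (2:ℂ) • x0v n := by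
  unfold Qpoly x0v xv yv
  rw [map_add, Derivation.map_smul, map_sum, pderiv_pow, pderiv_X_self]
  simp [pderiv_mul, pderiv_X_of_ne, (Fin.succ_ne_zero _), two_smul]
  ring

lemma pderiv_Qpoly_x (i : Fin n) : pderiv (Sum.inl i.succ) (Qpoly n) = (2:ℂ) • yv n i := by
  classical
  unfold Qpoly x0v xv yv
  rw [map_add, Derivation.map_smul, map_sum, pderiv_pow,
    pderiv_X_of_ne (by simp [(Fin.succ_ne_zero i).symm])]
  simp only [pderiv_mul, pderiv_X (R := ℂ), mul_zero, zero_mul, smul_eq_mul, mul_ite, mul_one,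
    ite_mul, one_mul]
  simp [Pi.single_apply, Fin.succ_inj, Finset.sum_ite_eq, two_smul]

lemma pderiv_Qpoly_y (i : Fin n) : pderiv (Sum.inr i) (Qpoly n) = (2:ℂ) • xv n i := by
  classical
  unfold Qpoly x0v xv yv
  rw [map_add, Derivation.map_smul, map_sum, pderiv_pow,
    pderiv_X_of_ne (by simp)]
  simp only [pderiv_mul, pderiv_X (R := ℂ), mul_zero, zero_mul, smul_eq_mul, mul_ite, mul_one,
    ite_mul, one_mul]
  simp [Pi.single_apply, Finset.sum_ite_eq, two_smul]
lemma Cx0 (u : SAlgB n m) :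
    pdx0 n m (η'op n m u) = η'op n m (pdx0 n m u) + (2:ℂ) • mx0 n m u := by
  have hm : mx0 n m u = (x0v n ⊗ₜ[ℂ] (1:ExtA m)) * u := rfl
  rw [η'mul, η'mul n m (pdx0 n m u), pdx0_eq, map_add, map_smul, map_sum, mapD_mul_poly,
    pderiv_Qpoly_x0, hm, ← smul_tmul', smul_mul_assoc]
  simp only [mapD_mul_ext]
  abel

lemma Cx (i : Fin n) (u : SAlgB n m) :
    pdx n m i (η'op n m u) = η'op n m (pdx n m i u) + (2:ℂ) • my n m i u := by
  have hm : my n m i u = (yv n i ⊗ₜ[ℂ] (1:ExtA m)) * u := rfl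
  rw [η'mul, η'mul n m (pdx n m i u), pdx_eq, map_add, map_smul, map_sum, mapD_mul_poly,
    pderiv_Qpoly_x, hm, ← smul_tmul', smul_mul_assoc]
  simp only [mapD_mul_ext]
  abel

lemma Cy (i : Fin n) (u : SAlgB n m) :
    pdy n m i (η'op n m u) = η'op n m (pdy n m i u) + (2:ℂ) • mx n m i u := by
  have hm : mx n m i u = (xv n i ⊗ₜ[ℂ] (1:ExtA m)) * u := rfl
  rw [η'mul, η'mul n m (pdy n m i u), pdy_eq, map_add, map_smul, map_sum, mapD_mul_poly,
    pderiv_Qpoly_y, hm, ← smul_tmul', smul_mul_assoc]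
  simp only [mapD_mul_ext]
  abel

lemma Cθ (r : Fin m) (u : SAlgB n m) :
    pdθ n m r (η'op n m u) = η'op n m (pdθ n m r u) + (2:ℂ) • mϑ n m r u := by
  have hm : mϑ n m r u = ((1:PolyB n) ⊗ₜ[ℂ] ϑv m r) * u := rfl
  rw [η'mul, η'mul n m (pdθ n m r u), hm]
  show TensorProduct.map LinearMap.id (dθ m r) _ = _
  rw [map_add, map_smul, map_sum, mapF_mul_poly]
  simp only [show TensorProduct.map LinearMap.id (dθ m r) = pdθ n m r from rfl, pdθ_mul_θϑ,
    ite_smul, one_smul, zero_smul, Finset.sum_add_distrib, Finset.sum_ite_eq,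
    Finset.mem_univ, if_true, smul_add]
  abel

lemma Cϑ (r : Fin m) (u : SAlgB n m) :
    pdϑ n m r (η'op n m u) = η'op n m (pdϑ n m r u) - (2:ℂ) • mθ n m r u := by
  have hm : mθ n m r u = ((1:PolyB n) ⊗ₜ[ℂ] θv m r) * u := rfl
  rw [η'mul, η'mul n m (pdϑ n m r u), hm]
  show TensorProduct.map LinearMap.id (dϑ m r) _ = _
  rw [map_add, map_smul, map_sum, mapF_mul_poly]
  simp only [show TensorProduct.map LinearMap.id (dϑ m r) = pdϑ n m r from rfl, pdϑ_mul_θϑ,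
    ite_smul, one_smul, zero_smul, Finset.sum_sub_distrib, Finset.sum_ite_eq,
    Finset.mem_univ, if_true, smul_sub]
  abel

lemma CM0 (u : SAlgB n m) : pdx0 n m (mx0 n m u) = mx0 n m (pdx0 n m u) + u := by
  show mapD n m (Sum.inl 0) ((x0v n ⊗ₜ[ℂ] (1:ExtA m)) * u)
    = (x0v n ⊗ₜ[ℂ] (1:ExtA m)) * (mapD n m (Sum.inl 0) u) + u
  rw [mapD_mul_poly]
  unfold x0v
  rw [pderiv_X_self, ← Algebra.TensorProduct.one_def, one_mul, add_comm]

lemma CMx (i : Fin n) (u : SAlgB n m) : pdx n m i (mx n m i u) = mx n m i (pdx n m i u) + u := by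
  show mapD n m (Sum.inl i.succ) ((xv n i ⊗ₜ[ℂ] (1:ExtA m)) * u)
    = (xv n i ⊗ₜ[ℂ] (1:ExtA m)) * (mapD n m (Sum.inl i.succ) u) + u
  rw [mapD_mul_poly]
  unfold xv
  rw [pderiv_X_self, ← Algebra.TensorProduct.one_def, one_mul, add_comm]

lemma CMθ (r : Fin m) (u : SAlgB n m) : pdθ n m r (mθ n m r u) = u - mθ n m r (pdθ n m r u) :=
  pdθ_mul_θ n m r u

def η'full : SAlgB n m := (x0v n ^ 2) ⊗ₜ[ℂ] (1 : ExtA m) + (2 : ℂ) • ηelt n m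

lemma η'op_apply (u : SAlgB n m) : η'op n m u = η'full n m * u := rfl

lemma commute_poly_η' (q : PolyB n) : Commute (q ⊗ₜ[ℂ] (1:ExtA m)) (η'full n m) := by
  have base : ∀ (p : PolyB n) (a : ExtA m), Commute (q ⊗ₜ[ℂ] (1:ExtA m)) (p ⊗ₜ[ℂ] a) := by
    intro p a
    show _ * _ = _ * _
    simp [Algebra.TensorProduct.tmul_mul_tmul, mul_comm]
  unfold η'full ηelt
  refine Commute.add_right (base _ _) (Commute.smul_right (Commute.add_right ?_ ?_) _) <;>
    exact Finset.sum_induction _ _ (fun _ _ => Commute.add_right) (Commute.zero_right _)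
      (fun _ _ => base _ _)
lemma commute_ext_η' (w : ExtA m)
    (hw : ∀ s, Commute w (θv m s * ϑv m s)) : Commute ((1:PolyB n) ⊗ₜ[ℂ] w) (η'full n m) := by
  have base : ∀ (p : PolyB n) (a : ExtA m), Commute w a →
      Commute ((1:PolyB n) ⊗ₜ[ℂ] w) (p ⊗ₜ[ℂ] a) := by
    intro p a ha
    show _ * _ = _ * _
    simp [Algebra.TensorProduct.tmul_mul_tmul, mul_comm, ha.eq]
  unfold η'full ηelt
  refine Commute.add_right (base _ _ (Commute.one_right w))
    (Commute.smul_right (Commute.add_right ?_ ?_) _)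
  · exact Finset.sum_induction _ _ (fun _ _ => Commute.add_right) (Commute.zero_right _)
      (fun _ _ => base _ _ (Commute.one_right w))
  · exact Finset.sum_induction _ _ (fun _ _ => Commute.add_right) (Commute.zero_right _)
      (fun s _ => base _ _ (hw s))

lemma Mop_comm (e : SAlgB n m) (hc : Commute e (η'full n m)) (u : SAlgB n m) :
    e * η'op n m u = η'op n m (e * u) := by
  rw [η'op_apply, η'op_apply, ← mul_assoc, hc.eq, mul_assoc]

lemma Mx0η (u : SAlgB n m) : mx0 n m (η'op n m u) = η'op n m (mx0 n m u) :=
  Mop_comm n m _ (commute_poly_η' n m _) u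
lemma Mxη (i : Fin n) (u : SAlgB n m) : mx n m i (η'op n m u) = η'op n m (mx n m i u) :=
  Mop_comm n m _ (commute_poly_η' n m _) u
lemma Myη (i : Fin n) (u : SAlgB n m) : my n m i (η'op n m u) = η'op n m (my n m i u) :=
  Mop_comm n m _ (commute_poly_η' n m _) u
lemma Mθη (r : Fin m) (u : SAlgB n m) : mθ n m r (η'op n m u) = η'op n m (mθ n m r u) :=
  Mop_comm n m _ (commute_ext_η' n m _ (fun s => by unfold θv ϑv; exact ι_comm_pair m _ _ _)) u
lemma Mϑη (r : Fin m) (u : SAlgB n m) : mϑ n m r (η'op n m u) = η'op n m (mϑ n m r u) :=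
  Mop_comm n m _ (commute_ext_η' n m _ (fun s => by unfold θv ϑv; exact ι_comm_pair m _ _ _)) u
lemma P00 (u : SAlgB n m) :
    pdx0 n m (pdx0 n m (η'op n m u))
      = η'op n m (pdx0 n m (pdx0 n m u)) + (4:ℂ) • mx0 n m (pdx0 n m u) + (2:ℂ) • u := by
  rw [Cx0, map_add, map_smul, Cx0, CM0]
  module

lemma Pxy (i : Fin n) (u : SAlgB n m) :
    pdx n m i (pdy n m i (η'op n m u))
      = η'op n m (pdx n m i (pdy n m i u)) + (2:ℂ) • my n m i (pdy n m i u)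
        + (2:ℂ) • mx n m i (pdx n m i u) + (2:ℂ) • u := by
  rw [Cy, map_add, map_smul, Cx, CMx]
  module

lemma Pθϑ (r : Fin m) (u : SAlgB n m) :
    pdθ n m r (pdϑ n m r (η'op n m u))
      = η'op n m (pdθ n m r (pdϑ n m r u)) + (2:ℂ) • mϑ n m r (pdϑ n m r u)
        + (2:ℂ) • mθ n m r (pdθ n m r u) - (2:ℂ) • u := by
  rw [Cϑ, map_sub, map_smul, Cθ, CMθ]
  module

lemma ΔS_η' (u : SAlgB n m) :
    ΔS n m (η'op n m u)
      = η'op n m (ΔS n m u) + (2:ℂ) • degA n m u + ((2:ℂ) * ((n:ℂ) - (m:ℂ))) • u := by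
  unfold ΔS degA
  simp only [LinearMap.add_apply, LinearMap.coe_sum, Finset.sum_apply, LinearMap.comp_apply,
    Pxy, Pθϑ, map_add, map_sum, map_smul, Finset.sum_add_distrib, Finset.sum_sub_distrib,
    Finset.sum_const, Finset.card_univ, Fintype.card_fin, smul_add]
  simp only [Finset.smul_sum]
  match_scalars <;> push_cast <;> ring

lemma keycomm (u : SAlgB n m) :
    Δ' n m (η'op n m u)
      = η'op n m (Δ' n m u) + (4:ℂ) • mx0 n m (pdx0 n m u) + (4:ℂ) • degA n m u
        + ((2:ℂ) + 4 * ((n:ℂ) - (m:ℂ))) • u := by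
  unfold Δ'
  simp only [LinearMap.add_apply, LinearMap.smul_apply, LinearMap.comp_apply]
  rw [P00, ΔS_η', map_add, map_smul]
  module
lemma mx0_apply (u : SAlgB n m) : mx0 n m u = (x0v n ⊗ₜ[ℂ] (1:ExtA m)) * u := rfl
lemma mx_apply (i : Fin n) (u : SAlgB n m) : mx n m i u = (xv n i ⊗ₜ[ℂ] (1:ExtA m)) * u := rfl
lemma my_apply (i : Fin n) (u : SAlgB n m) : my n m i u = (yv n i ⊗ₜ[ℂ] (1:ExtA m)) * u := rfl
lemma mθ_apply (r : Fin m) (u : SAlgB n m) : mθ n m r u = ((1:PolyB n) ⊗ₜ[ℂ] θv m r) * u := rfl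
lemma mϑ_apply (r : Fin m) (u : SAlgB n m) : mϑ n m r u = ((1:PolyB n) ⊗ₜ[ℂ] ϑv m r) * u := rfl

lemma sq_elt (u : SAlgB n m) :
    mx0 n m (mx0 n m u) + (∑ i, (mx n m i (my n m i u) + my n m i (mx n m i u)))
      + (∑ r, (mθ n m r (mϑ n m r u) - mϑ n m r (mθ n m r u))) = η'op n m u := by
  have hswap : ∀ r : Fin m, ϑv m r * θv m r = -(θv m r * ϑv m r) := fun r =>
    eq_neg_of_add_eq_zero_left (by
      unfold θv ϑv; rw [add_comm]; exact ExteriorAlgebra.ι_add_mul_swap _ _)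
  have hferm : ∀ r : Fin m, mθ n m r (mϑ n m r u) - mϑ n m r (mθ n m r u)
      = (2:ℂ) • (((1:PolyB n) ⊗ₜ[ℂ] (θv m r * ϑv m r)) * u) := by
    intro r
    rw [mθ_apply, mϑ_apply, mθ_apply, mϑ_apply, ← mul_assoc, ← mul_assoc,
      Algebra.TensorProduct.tmul_mul_tmul, Algebra.TensorProduct.tmul_mul_tmul, one_mul,
      hswap r, ← neg_one_smul ℂ (θv m r * ϑv m r), tmul_smul, smul_mul_assoc]
    match_scalars
    ring
  have hbos : ∀ i : Fin n, mx n m i (my n m i u) + my n m i (mx n m i u)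
      = (2:ℂ) • (((xv n i * yv n i) ⊗ₜ[ℂ] (1:ExtA m)) * u) := by
    intro i
    rw [mx_apply, my_apply, mx_apply, my_apply, ← mul_assoc, ← mul_assoc,
      Algebra.TensorProduct.tmul_mul_tmul, Algebra.TensorProduct.tmul_mul_tmul, one_mul,
      mul_comm (yv n i) (xv n i)]
    match_scalars
    ring
  have hx0 : mx0 n m (mx0 n m u) = ((x0v n ^ 2) ⊗ₜ[ℂ] (1:ExtA m)) * u := by
    rw [mx0_apply, mx0_apply, ← mul_assoc, Algebra.TensorProduct.tmul_mul_tmul, one_mul,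
      ← pow_two]
  rw [η'mul]
  unfold Qpoly
  rw [show ((x0v n ^ 2 + (2:ℂ) • ∑ i, xv n i * yv n i) ⊗ₜ[ℂ] (1 : ExtA m))
      = (x0v n ^ 2) ⊗ₜ[ℂ] (1 : ExtA m)
        + (2:ℂ) • ∑ i, (xv n i * yv n i) ⊗ₜ[ℂ] (1 : ExtA m) by
    rw [add_tmul, ← smul_tmul', sum_tmul]]
  simp only [hferm, hbos, hx0, add_mul, smul_mul_assoc, Finset.sum_mul, Finset.smul_sum]
lemma Eη' (u : SAlgB n m) :
    mx0 n m (pdx0 n m (η'op n m u)) + degA n m (η'op n m u)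
      = η'op n m (mx0 n m (pdx0 n m u) + degA n m u) + (2:ℂ) • η'op n m u := by
  conv_rhs => rw [← sq_elt n m u]
  rw [Cx0]
  unfold degA
  simp only [LinearMap.add_apply, LinearMap.coe_sum, Finset.sum_apply, LinearMap.comp_apply,
    Cx, Cy, Cθ, Cϑ, map_add, map_sub, map_smul, map_sum, Mx0η, Mxη, Myη, Mθη, Mϑη,
    Finset.sum_add_distrib, Finset.sum_sub_distrib, Finset.smul_sum, smul_add, smul_sub]
  module
theorem delta'_eta'_pow (g : SAlgB n m) (k : ℕ)
    (hg0 : pdx0 n m g = 0) (hg : ΔS n m g = 0) (hk : degA n m g = (k : ℂ) • g) :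
    ∀ ℓ : ℕ, 1 ≤ ℓ →
      Δ' n m ((η'op n m ^ ℓ) g)
        = ((2 * ℓ : ℂ) * (1 + 2 * ((n : ℂ) - m + k + ℓ - 1))) • (η'op n m ^ (ℓ - 1)) g := by
  have hdeg : ∀ j : ℕ, mx0 n m (pdx0 n m ((η'op n m ^ j) g)) + degA n m ((η'op n m ^ j) g)
      = ((2 * (j:ℂ) + (k:ℂ))) • ((η'op n m ^ j) g) := by
    intro j
    induction j with
    | zero =>
        simp only [pow_zero, Module.End.one_apply, hg0, map_zero, hk, zero_add, Nat.cast_zero]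
        match_scalars; ring
    | succ j ih =>
        have hpow : (η'op n m ^ (j+1)) g = η'op n m ((η'op n m ^ j) g) := by
          rw [pow_succ']; rfl
        rw [hpow, Eη', ih, map_smul]
        match_scalars <;> push_cast <;> ring
  have hΔg : Δ' n m g = 0 := by
    unfold Δ'
    simp only [LinearMap.add_apply, LinearMap.smul_apply, LinearMap.comp_apply, hg0, hg,
      map_zero, smul_zero, add_zero]
  intro ℓ hℓ
  induction ℓ, hℓ using Nat.le_induction with
  | base =>
      rw [pow_one, keycomm, hΔg, map_zero, hg0, map_zero, hk]
      simp only [Nat.sub_self, pow_zero, Module.End.one_apply, smul_zero, zero_add]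
      match_scalars <;> push_cast <;> ring
  | succ ℓ hℓ ih =>
      have hpow : (η'op n m ^ (ℓ+1)) g = η'op n m ((η'op n m ^ ℓ) g) := by
        rw [pow_succ']; rfl
      have hps : η'op n m ((η'op n m ^ (ℓ-1)) g) = (η'op n m ^ ℓ) g := by
        conv_rhs => rw [show ℓ = (ℓ-1)+1 from (Nat.succ_pred_eq_of_pos hℓ).symm]
        rw [pow_succ']; rfl
      rw [hpow, keycomm, ih, map_smul, hps, Nat.add_sub_cancel]
      push_cast
      linear_combination (norm := module) (4:ℂ) • hdeg ℓ
end
end
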